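/- Let V : (0,∞) → ℝ be convex with V(s) ≥ (K−s)^+ for all s > 0, V(s) = K − s for all s in some nonempty interval (0, c) with c < K, and V(s) > 0 for all s > 0. Then the set {s > 0 : V(s) = K − s} is an interval of the form (0, A*] for some A* ∈ [c, K). -/

import Mathlib

/-!
Since `V ≥ K - s`, the stopping set is the sublevel set `{s > 0 | V s + s ≤ K}` of the convex
function `V + id`, hence an interval. Convex functions on open sets are continuous, so this sublevel
set contains its supremum `A`, which is finite because `V > 0` forces `s < K` on the stopping set.
-/

open Real Set

lemma Set.OrdConnected.eq_Ioc_csSup {α : Type*} [ConditionallyCompleteLinearOrder α]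
    [DenselyOrdered α] {T : Set α} {a c : α} (hT : T.OrdConnected) (hTa : T ⊆ Ioi a)
    (hac : a < c) (hIoo : Ioo a c ⊆ T) (hbdd : BddAbove T) (hmem : sSup T ∈ T) :
    T = Ioc a (sSup T) := by
  ext x
  refine ⟨fun hx ↦ ⟨hTa hx, le_csSup hbdd hx⟩, fun ⟨hax, hxA⟩ ↦ ?_⟩
  obtain ⟨y, hay, hy⟩ := exists_between (lt_min hac hax)
  exact hT.out (hIoo ⟨hay, hy.trans_le (min_le_left _ _)⟩) hmem
    ⟨(hy.trans_le (min_le_right _ _)).le, hxA⟩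

lemma ConvexOn.csSup_sublevel_mem {a r : ℝ} {f : ℝ → ℝ} (hf : ConvexOn ℝ (Ioi a) f)
    (hne : {x ∈ Ioi a | f x ≤ r}.Nonempty) (hbdd : BddAbove {x ∈ Ioi a | f x ≤ r}) :
    sSup {x ∈ Ioi a | f x ≤ r} ∈ {x ∈ Ioi a | f x ≤ r} := by
  set T := {x ∈ Ioi a | f x ≤ r}
  obtain ⟨x, hx⟩ := hne
  have haA : sSup T ∈ Ioi a := hx.1.trans_le (le_csSup hbdd hx)
  have hcont : ContinuousAt f (sSup T) :=
    (hf.continuousOn isOpen_Ioi).continuousAt (isOpen_Ioi.mem_nhds haA)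
  exact ⟨haA, hcont.continuousWithinAt.closure_le (csSup_mem_closure ⟨x, hx⟩ hbdd)
    continuousWithinAt_const fun y hy ↦ hy.2⟩

theorem stmt6_general (K : ℝ) (V : ℝ → ℝ)
    (hconv : ConvexOn ℝ (Set.Ioi 0) V)
    (hge : ∀ s ∈ Set.Ioi (0 : ℝ), max (K - s) 0 ≤ V s)
    (c : ℝ) (hc0 : 0 < c)
    (heq : ∀ s ∈ Set.Ioo (0 : ℝ) c, V s = K - s)
    (hpos : ∀ s ∈ Set.Ioi (0 : ℝ), 0 < V s) :
    ∃ A ∈ Set.Ico c K, {s : ℝ | 0 < s ∧ V s = K - s} = Set.Ioc 0 A := by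
  have hconvT : ConvexOn ℝ (Ioi 0) fun s ↦ V s + s := hconv.add (convexOn_id (convex_Ioi 0))
  set T := {s ∈ Ioi (0 : ℝ) | V s + s ≤ K}
  have hST : {s : ℝ | 0 < s ∧ V s = K - s} = T := by
    ext s
    refine and_congr_right fun hs ↦ ?_
    have hKs := (le_max_left _ _).trans (hge s hs)
    constructor <;> intro <;> linarith
  have hIoo : Ioo 0 c ⊆ T := fun s hs ↦ ⟨hs.1, by linarith [heq s hs]⟩
  have hTK : T ⊆ Iio K := fun s hs ↦ mem_Iio.2 (by linarith [hpos s hs.1, hs.2])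
  have hbdd : BddAbove T := ⟨K, fun s hs ↦ (hTK hs).le⟩
  have hmem := hconvT.csSup_sublevel_mem ((nonempty_Ioo.2 hc0).mono hIoo) hbdd
  have hTeq := (hconvT.convex_le K).ordConnected.eq_Ioc_csSup (fun s hs ↦ hs.1) hc0 hIoo hbdd hmem
  have hcA : c ≤ sSup T :=
    (csSup_Ioo hc0).symm.trans_le (csSup_le_csSup hbdd (nonempty_Ioo.2 hc0) hIoo)
  exact ⟨sSup T, ⟨hcA, hTK hmem⟩, hST.trans hTeq⟩

theorem stmt6 (K : ℝ) (hK : 0 < K) (V : ℝ → ℝ)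
    (hconv : ConvexOn ℝ (Set.Ioi 0) V)
    (hge : ∀ s ∈ Set.Ioi (0 : ℝ), max (K - s) 0 ≤ V s)
    (c : ℝ) (hc0 : 0 < c) (hcK : c < K)
    (heq : ∀ s ∈ Set.Ioo (0 : ℝ) c, V s = K - s)
    (hpos : ∀ s ∈ Set.Ioi (0 : ℝ), 0 < V s) :
    ∃ A ∈ Set.Ico c K, {s : ℝ | 0 < s ∧ V s = K - s} = Set.Ioc 0 A :=
  stmt6_general K V hconv hge c hc0 heq hpos
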